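/- arXiv:1604.06056 — 2 statements merged into one kernel-verified Lean document; each statement's English description precedes it below -/
import Mathlib

section
/- An induced cycle of length at least 5 in a graph $G$ contains at most one vertex from any set of pairwise twins of $G$. -/
open SimpleGraph

def Twins {V : Type*} (G : SimpleGraph V) (v w : V) : Prop :=
  v ≠ w ∧ ∀ x : V, x ≠ v → x ≠ w → (G.Adj v x ↔ G.Adj w x)

def cycleAdj (n : ℕ) (i j : Fin n) : Prop :=
  i ≠ j ∧ ((i.val + 1) % n = j.val ∨ (j.val + 1) % n = i.val)

/-!
The map `i ↦ f i` is a graph embedding of `cycleGraph n` into `G`, and twins of `G` in its image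
pull back to twins of `cycleGraph n`. In the cycle, the twin `j` of `i` must be adjacent to (or
equal to) the neighbour `i + 1` of `i`, so `j - i ∈ {1, 2}`; symmetrically `i - j ∈ {1, 2}`.
Adding up, `0 ∈ {2, 3, 4}` in `Fin n`, impossible for `n ≥ 5`.
-/

open scoped Fin.CommRing

theorem Twins.symm {V : Type*} {G : SimpleGraph V} {v w : V} (h : Twins G v w) : Twins G w v :=
  ⟨h.1.symm, fun x hw hv => (h.2 x hv hw).symm⟩

theorem Twins.comap {V W : Type*} {G : SimpleGraph V} {H : SimpleGraph W} (φ : H ↪g G)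
    {v w : W} (h : Twins G (φ v) (φ w)) : Twins H v w :=
  ⟨φ.injective.ne_iff.1 h.1, fun x hv hw => by
    simpa using h.2 (φ x) (φ.injective.ne hv) (φ.injective.ne hw)⟩

theorem cycleAdj_iff_cycleGraph_adj : ∀ {n : ℕ} {i j : Fin n},
    cycleAdj n i j ↔ (cycleGraph n).Adj i j
  | 0, i, _ => i.elim0
  | 1, i, j => by simp [cycleAdj, Subsingleton.elim i j]
  | n + 2, i, j => by
    have hsucc (a b : Fin (n + 2)) : (a.val + 1) % (n + 2) = b.val ↔ b - a = 1 := by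
      rw [sub_eq_iff_eq_add', ← Fin.val_inj, Fin.val_add, Fin.val_one, eq_comm]
    rw [cycleAdj, cycleGraph_adj, hsucc, hsucc, or_comm, and_iff_right_iff_imp]
    rintro (h | h) rfl <;> simp at h

theorem Twins.sub_eq_one_or_two_of_cycleGraph {n : ℕ} {i j : Fin (n + 2)}
    (h : Twins (cycleGraph (n + 2)) i j) : j - i = 1 ∨ j - i = 2 := by
  by_cases hj : i + 1 = j
  · exact Or.inl (by rw [← hj]; ring)
  have hadj : (cycleGraph (n + 2)).Adj j (i + 1) := by
    refine (h.2 (i + 1) (by simp) hj).1 ?_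
    rw [cycleGraph_adj]; right; ring
  rw [cycleGraph_adj] at hadj
  rcases hadj with hadj | hadj
  · right; linear_combination hadj
  · exact absurd (by linear_combination hadj) h.1

theorem not_twins_cycleGraph {n : ℕ} (hn : 5 ≤ n) (i j : Fin n) :
    ¬ Twins (cycleGraph n) i j := by
  obtain ⟨m, rfl⟩ : ∃ m, n = m + 2 := ⟨n - 2, by omega⟩
  intro h
  have hsum : (j - i) + (i - j) = 0 := by ring
  rcases h.sub_eq_one_or_two_of_cycleGraph with h₁ | h₁ <;>
    rcases h.symm.sub_eq_one_or_two_of_cycleGraph with h₂ | h₂ <;>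
    rw [h₁, h₂] at hsum <;> norm_num [Fin.ext_iff] at hsum <;>
    exact absurd (Nat.le_of_dvd (by norm_num) (Nat.dvd_of_mod_eq_zero hsum)) (by omega)

/-- An induced cycle of length at least 5 contains at most one vertex from any
set of pairwise twins. -/
theorem stmt7 {V : Type*} (G : SimpleGraph V) (n : ℕ) (hn : 5 ≤ n)
    (f : Fin n → V) (hinj : Function.Injective f)
    (hcyc : ∀ i j : Fin n, G.Adj (f i) (f j) ↔ cycleAdj n i j)
    (A : Set V) (hA : ∀ v ∈ A, ∀ w ∈ A, v ≠ w → Twins G v w) :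
    ∀ i j : Fin n, f i ∈ A → f j ∈ A → i = j := by
  intro i j hi hj
  let φ : cycleGraph n ↪g G :=
    ⟨⟨f, hinj⟩, fun {a b} => (hcyc a b).trans cycleAdj_iff_cycleGraph_adj⟩
  by_contra hij
  exact not_twins_cycleGraph hn i j (Twins.comap φ (hA _ hi _ hj (hinj.ne hij)))
end

section
/- Let $C_1, C_2$ be disjoint vertex sets in a graph $G$ such that $C_1$ is complete to $C_2$, each $C_i$ is a set of pairwise twins, $a_1 \in C_1$, $a_2 \in C_2$, and let $x \in N_G(C_1) \setminus (C_2 \cup N_G(C_2))$ and $y_1, y_2 \in N_G(C_1) \cap N_G(C_2)$ such that $x$ is adjacent to $y_1$, $x$ is not adjacent to $y_2$, and $y_1$ is not adjacent to $y_2$. Then the induced subgraph of $G$ on $\{x, y_1, y_2, a_1, a_2\}$ is isomorphic to the gem; in particular $G$ is not distance-hereditary. -/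
open SimpleGraph

def DistHereditary {V : Type*} (G : SimpleGraph V) : Prop :=
  ∀ S : Set V, (G.induce S).Connected →
    ∀ u v : S, (G.induce S).dist u v = G.dist (u : V) (v : V)

/-- The set of vertices outside `C` having a neighbor in `C`. -/
def nbhdSet {V : Type*} (G : SimpleGraph V) (C : Set V) : Set V :=
  {v | v ∉ C ∧ ∃ c ∈ C, G.Adj v c}

/-- The gem graph: an induced path `x y₁ a₂ y₂` plus a dominating vertex. -/
def gemG : SimpleGraph (Fin 5) :=
  SimpleGraph.fromEdgeSet {s(0,1), s(1,2), s(2,3), s(4,0), s(4,1), s(4,2), s(4,3)}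

lemma adj_all {V : Type*} (G : SimpleGraph V) (C : Set V)
    (htw : ∀ v ∈ C, ∀ w ∈ C, v ≠ w → Twins G v w)
    (v : V) (hv : v ∉ C) (h : ∃ c ∈ C, G.Adj v c) :
    ∀ a ∈ C, G.Adj v a := by
  obtain ⟨c, hc, hadj⟩ := h
  intro a ha
  by_cases hca : c = a
  · exact hca ▸ hadj
  · have ht := htw c hc a ha hca
    have hvc : v ≠ c := fun h => hv (h ▸ hc)
    have hva : v ≠ a := fun h => hv (h ▸ ha)
    exact ((ht.2 v hvc hva).mp hadj.symm).symm

set_option maxHeartbeats 1000000 in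
theorem stmt16 {V : Type*} (G : SimpleGraph V) (C1 C2 : Set V)
    (hdisj : Disjoint C1 C2)
    (hcomp : ∀ a ∈ C1, ∀ b ∈ C2, G.Adj a b)
    (htw1 : ∀ v ∈ C1, ∀ w ∈ C1, v ≠ w → Twins G v w)
    (htw2 : ∀ v ∈ C2, ∀ w ∈ C2, v ≠ w → Twins G v w)
    (a1 a2 : V) (ha1 : a1 ∈ C1) (ha2 : a2 ∈ C2)
    (x : V) (hx : x ∈ nbhdSet G C1 \ (C2 ∪ nbhdSet G C2))
    (y1 y2 : V) (hy1 : y1 ∈ nbhdSet G C1 ∩ nbhdSet G C2)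
    (hy2 : y2 ∈ nbhdSet G C1 ∩ nbhdSet G C2)
    (hxy1 : G.Adj x y1) (hxy2 : ¬ G.Adj x y2) (hy12 : ¬ G.Adj y1 y2) :
    Nonempty ((G.induce ({x, y1, y2, a1, a2} : Set V)) ≃g gemG) ∧
    ¬ DistHereditary G := by
  -- basic facts
  have hxC1 : x ∉ C1 := hx.1.1
  have hxC2 : x ∉ C2 := fun h => hx.2 (Or.inl h)
  have hxN2 : ∀ c ∈ C2, ¬ G.Adj x c := by
    intro c hc hadj
    exact hx.2 (Or.inr ⟨hxC2, c, hc, hadj⟩)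
  have hxa1 : G.Adj x a1 := adj_all G C1 htw1 x hxC1 hx.1.2 a1 ha1
  have hxa2 : ¬ G.Adj x a2 := hxN2 a2 ha2
  have hy1a1 : G.Adj y1 a1 := adj_all G C1 htw1 y1 hy1.1.1 hy1.1.2 a1 ha1
  have hy1a2 : G.Adj y1 a2 := adj_all G C2 htw2 y1 hy1.2.1 hy1.2.2 a2 ha2
  have hy2a1 : G.Adj y2 a1 := adj_all G C1 htw1 y2 hy2.1.1 hy2.1.2 a1 ha1
  have hy2a2 : G.Adj y2 a2 := adj_all G C2 htw2 y2 hy2.2.1 hy2.2.2 a2 ha2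
  have ha12 : G.Adj a1 a2 := hcomp a1 ha1 a2 ha2
  -- distinctness
  have nxy1 : x ≠ y1 := hxy1.ne
  have nxy2 : x ≠ y2 := by
    rintro rfl
    obtain ⟨c, hc, hadj⟩ := hy2.2.2
    exact hxN2 c hc hadj
  have nxa1 : x ≠ a1 := hxa1.ne
  have nxa2 : x ≠ a2 := fun h => hxC2 (h ▸ ha2)
  have ny12 : y1 ≠ y2 := fun h => hxy2 (h ▸ hxy1)
  have ny1a1 : y1 ≠ a1 := hy1a1.ne
  have ny1a2 : y1 ≠ a2 := hy1a2.ne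
  have ny2a1 : y2 ≠ a1 := hy2a1.ne
  have ny2a2 : y2 ≠ a2 := hy2a2.ne
  have na12 : a1 ≠ a2 := fun h => (hdisj.ne_of_mem ha1 ha2) h
  constructor
  · -- the gem isomorphism
    set S : Set V := {x, y1, y2, a1, a2} with hS
    have hmx : x ∈ S := by simp [hS]
    have hmy1 : y1 ∈ S := by simp [hS]
    have hmy2 : y2 ∈ S := by simp [hS]
    have hma1 : a1 ∈ S := by simp [hS]
    have hma2 : a2 ∈ S := by simp [hS]
    let f : Fin 5 → S := ![⟨x, hmx⟩, ⟨y1, hmy1⟩, ⟨a2, hma2⟩, ⟨y2, hmy2⟩, ⟨a1, hma1⟩]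
    have hf : Function.Bijective f := by
      constructor
      · intro i j h
        have h' : (f i : V) = (f j : V) := congrArg Subtype.val h
        fin_cases i <;> fin_cases j <;> simp only [f] at h' <;>
          first
          | rfl
          | (exfalso; revert h'; simp [nxy1, nxy2, nxa1, nxa2, ny12, ny1a1, ny1a2,
              ny2a1, ny2a2, na12, nxy1.symm, nxy2.symm, nxa1.symm, nxa2.symm, ny12.symm,
              ny1a1.symm, ny1a2.symm, ny2a1.symm, ny2a2.symm, na12.symm])
      · rintro ⟨v, hv⟩
        rcases hv with rfl | rfl | rfl | rfl | rfl
        · exact ⟨0, rfl⟩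
        · exact ⟨1, rfl⟩
        · exact ⟨3, rfl⟩
        · exact ⟨4, rfl⟩
        · exact ⟨2, rfl⟩
    have hxa2' : ¬ G.Adj a2 x := fun h => hxa2 h.symm
    have hxy2' : ¬ G.Adj y2 x := fun h => hxy2 h.symm
    have hy12' : ¬ G.Adj y2 y1 := fun h => hy12 h.symm
    have key : ∀ a b : Fin 5, (G.induce S).Adj (f a) (f b) ↔ gemG.Adj a b := by
      intro a b
      fin_cases a <;> fin_cases b <;>
        simp [f, gemG, hxy1, hxy2, hy12, hxa1, hxa2, hy1a1, hy1a2,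
          hy2a1, hy2a2, ha12, hxy1.symm, hy1a2.symm, hy2a2.symm, hxa1.symm, hy1a1.symm,
          hy2a1.symm, ha12.symm, hxa2', hxy2', hy12']
    exact ⟨(⟨Equiv.ofBijective f hf, key _ _⟩ : gemG ≃g G.induce S).symm⟩
  · -- not distance-hereditary, using T = {x, y1, a2, y2}
    intro hDH
    set T : Set V := {x, y1, a2, y2} with hT
    have hmx : x ∈ T := by simp [hT]
    have hmy1 : y1 ∈ T := by simp [hT]
    have hma2 : a2 ∈ T := by simp [hT]
    have hmy2 : y2 ∈ T := by simp [hT]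
    have e1 : (G.induce T).Adj ⟨x, hmx⟩ ⟨y1, hmy1⟩ := by simpa using hxy1
    have e2 : (G.induce T).Adj ⟨y1, hmy1⟩ ⟨a2, hma2⟩ := by simpa using hy1a2
    have e3 : (G.induce T).Adj ⟨a2, hma2⟩ ⟨y2, hmy2⟩ := by simpa using hy2a2.symm
    have hreach : ∀ v : T, (G.induce T).Reachable ⟨x, hmx⟩ v := by
      rintro ⟨v, hv⟩
      rcases hv with rfl | rfl | rfl | rfl
      · exact SimpleGraph.Reachable.refl _
      · exact e1.reachable
      · exact e1.reachable.trans e2.reachable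
      · exact (e1.reachable.trans e2.reachable).trans e3.reachable
    have hconn : (G.induce T).Connected := by
      constructor
      intro u v
      exact (hreach u).symm.trans (hreach v)
    have hGdist : G.dist x y2 = 2 := by
      have hle : G.dist x y2 ≤ 2 := by
        have := SimpleGraph.dist_le (hxa1.toWalk.append hy2a1.symm.toWalk)
        simpa using this
      have hr : G.Reachable x y2 := ⟨hxa1.toWalk.append hy2a1.symm.toWalk⟩
      have hne0 : G.dist x y2 ≠ 0 := (hr.pos_dist_of_ne nxy2).ne'
      have hne1 : G.dist x y2 ≠ 1 := fun h => hxy2 (SimpleGraph.dist_eq_one_iff_adj.mp h)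
      omega
    have hIdist : (G.induce T).dist ⟨x, hmx⟩ ⟨y2, hmy2⟩ = 3 := by
      have hle : (G.induce T).dist ⟨x, hmx⟩ ⟨y2, hmy2⟩ ≤ 3 := by
        have := SimpleGraph.dist_le ((e1.toWalk.append e2.toWalk).append e3.toWalk)
        simpa using this
      have hne : (⟨x, hmx⟩ : T) ≠ ⟨y2, hmy2⟩ := by
        simp only [ne_eq, Subtype.mk.injEq]; exact nxy2
      have hne0 : (G.induce T).dist ⟨x, hmx⟩ ⟨y2, hmy2⟩ ≠ 0 :=
        ((hreach ⟨y2, hmy2⟩).pos_dist_of_ne hne).ne'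
      have hne1 : (G.induce T).dist ⟨x, hmx⟩ ⟨y2, hmy2⟩ ≠ 1 := by
        intro h
        have := SimpleGraph.dist_eq_one_iff_adj.mp h
        exact hxy2 (by simpa using this)
      have hne2 : (G.induce T).dist ⟨x, hmx⟩ ⟨y2, hmy2⟩ ≠ 2 := by
        intro h
        obtain ⟨p, hp⟩ := (hreach ⟨y2, hmy2⟩).exists_walk_length_eq_dist
        rw [h] at hp
        cases p with
        | nil => simp at hp
        | cons hadj q =>
          cases q with
          | nil => simp at hp
          | cons hadj2 q2 =>
            have hq2 : q2.length = 0 := by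
              simp only [SimpleGraph.Walk.length_cons] at hp; omega
            have heq := SimpleGraph.Walk.eq_of_length_eq_zero hq2
            subst heq
            rename_i b
            obtain ⟨b, hb⟩ := b
            have h1 : G.Adj x b := by simpa using hadj
            have h2 : G.Adj b y2 := by simpa using hadj2
            rcases hb with rfl | rfl | rfl | rfl
            · exact G.loopless.irrefl _ h1
            · exact hy12 h2
            · exact hxa2 h1
            · exact G.loopless.irrefl _ h2
      omega
    have hd := hDH T hconn ⟨x, hmx⟩ ⟨y2, hmy2⟩
    rw [hIdist, hGdist] at hd
    exact absurd hd (by norm_num)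
end
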